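/- Let X_n ∈ Mₙ(C) be the lowering matrix with entries (X_n)_{k,k−1} = √(k−1) for 1 ≤ k ≤ n−1 (and zero elsewhere), and let D_n = √(2/θ)·[[0, X_n*],[X_n, 0]] ∈ M_{2n}(C). Then Ω¹_{D_n}(Mₙ(C)) — where Mₙ(C) acts diagonally as a ⊕ a on Cⁿ ⊕ Cⁿ — equals the set of all 2n×2n block matrices of the form [[0, A],[B, 0]] with A, B ∈ Mₙ(C). -/

import Mathlib

/-- The lowering matrix X_n, with (X_n)_{k,k−1} = √k (0-indexed). -/
noncomputable def lowering (n : ℕ) : Matrix (Fin n) (Fin n) ℂ :=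
  fun i j => if (i : ℕ) = (j : ℕ) + 1 then ((Real.sqrt (i : ℕ) : ℝ) : ℂ) else 0

/-- The Dirac operator D_n = √(2/θ) [[0, X_n*],[X_n, 0]] on ℂⁿ ⊕ ℂⁿ. -/
noncomputable def diracN (n : ℕ) (θ : ℝ) : Matrix (Fin n ⊕ Fin n) (Fin n ⊕ Fin n) ℂ :=
  ((Real.sqrt (2 / θ) : ℝ) : ℂ) •
    Matrix.fromBlocks 0 (lowering n).conjTranspose (lowering n) 0

/-!
For `D = [[0, P], [Q, 0]]` one computes `(a ⊕ a)[D, b ⊕ b] = [[0, a[P, b]], [a[Q, b], 0]]`, so every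
1-form is block off-diagonal. Conversely, the 1-forms are stable under left multiplication by
`a ⊕ a`, and since `e_{ki} M e_{jk} = M_{ij} e_{kk}`, for `i ≠ j`
`∑ₖ (e_{ki} ⊕ e_{ki})[D, e_{jk} ⊕ e_{jk}] = [[0, P_{ij}], [Q_{ij}, 0]]`.
For `D_n` the pairs `(i, j) = (0, 1)` and `(1, 0)` give `√(2/θ)·[[0, 1], [0, 0]]` and
`√(2/θ)·[[0, 0], [1, 0]]`, which generate all of `[[0, A], [B, 0]]`.
-/

open Matrix

theorem sum_fromBlocks_zero_zero {ι l m n o α : Type*} [AddCommMonoid α] (s : Finset ι)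
    (A : ι → Matrix n m α) (B : ι → Matrix o l α) :
    ∑ k ∈ s, fromBlocks 0 (A k) (B k) 0 = fromBlocks 0 (∑ k ∈ s, A k) (∑ k ∈ s, B k) 0 := by
  ext (i | i) (j | j) <;> simp [Matrix.sum_apply]

theorem sum_single_mul_commutator_single {R m : Type*} [Ring R] [Fintype m] [DecidableEq m]
    (M : Matrix m m R) {i j : m} (hij : i ≠ j) :
    ∑ k, single k i (1 : R) * (M * single j k 1 - single j k 1 * M) = M i j • 1 := by
  simp_rw [mul_sub, ← mul_assoc, single_mul_mul_single, single_mul_single_of_ne _ _ _ _ hij,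
    zero_mul, sub_zero, one_mul, mul_one]
  rw [← sum_single_one, Finset.smul_sum]
  simp [smul_single]

theorem fromBlocks_diagonal_mul_commutator {R m : Type*} [Ring R] [Fintype m]
    (P Q a b : Matrix m m R) :
    fromBlocks a 0 0 a * (fromBlocks 0 P Q 0 * fromBlocks b 0 0 b
        - fromBlocks b 0 0 b * fromBlocks 0 P Q 0)
      = fromBlocks 0 (a * (P * b - b * P)) (a * (Q * b - b * Q)) 0 := by
  simp [fromBlocks_multiply, sub_eq_add_neg, fromBlocks_neg, fromBlocks_add, mul_add]

def offDiagonalBlocks {R m : Type*} [Semiring R] : Submodule R (Matrix (m ⊕ m) (m ⊕ m) R) where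
  carrier := {x | ∃ A B : Matrix m m R, x = fromBlocks 0 A B 0}
  zero_mem' := ⟨0, 0, fromBlocks_zero.symm⟩
  add_mem' := by
    rintro _ _ ⟨A, B, rfl⟩ ⟨A', B', rfl⟩
    exact ⟨A + A', B + B', by simp [fromBlocks_add]⟩
  smul_mem' := by
    rintro r _ ⟨A, B, rfl⟩
    exact ⟨r • A, r • B, by simp [fromBlocks_smul]⟩

section OneForms

variable {R m : Type*} [CommRing R] [Fintype m]

/-- Connes' 1-forms `Ω¹_D(Mₘ(R))`, for `Mₘ(R)` acting on `Rᵐ ⊕ Rᵐ` by `a ↦ a ⊕ a`. -/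
def oneForms (D : Matrix (m ⊕ m) (m ⊕ m) R) : Submodule R (Matrix (m ⊕ m) (m ⊕ m) R) :=
  Submodule.span R {x | ∃ a b : Matrix m m R,
    x = fromBlocks a 0 0 a * (D * fromBlocks b 0 0 b - fromBlocks b 0 0 b * D)}

theorem oneForms_le_offDiagonalBlocks (P Q : Matrix m m R) :
    oneForms (fromBlocks 0 P Q 0) ≤ offDiagonalBlocks := by
  refine Submodule.span_le.mpr ?_
  rintro _ ⟨a, b, rfl⟩
  exact ⟨_, _, fromBlocks_diagonal_mul_commutator P Q a b⟩

theorem fromBlocks_diagonal_mul_mem_oneForms {D : Matrix (m ⊕ m) (m ⊕ m) R} (a : Matrix m m R)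
    {x : Matrix (m ⊕ m) (m ⊕ m) R} (hx : x ∈ oneForms D) :
    fromBlocks a 0 0 a * x ∈ oneForms D := by
  induction hx using Submodule.span_induction with
  | mem _ h =>
    obtain ⟨a', b, rfl⟩ := h
    refine Submodule.subset_span ⟨a * a', b, ?_⟩
    rw [← mul_assoc, fromBlocks_multiply]
    simp
  | zero => simp
  | add _ _ _ _ hx hy => simpa [mul_add] using add_mem hx hy
  | smul r _ _ hx => simpa using Submodule.smul_mem _ r hx

theorem fromBlocks_smul_one_mem_oneForms [DecidableEq m] (P Q : Matrix m m R) {i j : m}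
    (hij : i ≠ j) :
    fromBlocks 0 (P i j • 1) (Q i j • 1) 0 ∈ oneForms (fromBlocks 0 P Q 0) := by
  rw [← sum_single_mul_commutator_single P hij, ← sum_single_mul_commutator_single Q hij,
    ← sum_fromBlocks_zero_zero]
  refine Submodule.sum_mem _ fun k _ => Submodule.subset_span ⟨single k i 1, single j k 1, ?_⟩
  rw [fromBlocks_diagonal_mul_commutator]

end OneForms

theorem oneForms_fromBlocks_eq_offDiagonalBlocks {K m : Type*} [Field K] [Fintype m]
    [DecidableEq m] (P Q : Matrix m m K) {i j : m} (hij : i ≠ j)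
    (hPij : P i j ≠ 0) (hQij : Q i j = 0) (hPji : P j i = 0) (hQji : Q j i ≠ 0) :
    oneForms (fromBlocks 0 P Q 0) = offDiagonalBlocks := by
  refine le_antisymm (oneForms_le_offDiagonalBlocks P Q) ?_
  rintro _ ⟨A, B, rfl⟩
  have hA : fromBlocks 0 A 0 0 ∈ oneForms (fromBlocks 0 P Q 0) := by
    simpa [fromBlocks_multiply, hQij, hPij] using fromBlocks_diagonal_mul_mem_oneForms
      ((P i j)⁻¹ • A) (fromBlocks_smul_one_mem_oneForms P Q hij)
  have hB : fromBlocks 0 0 B 0 ∈ oneForms (fromBlocks 0 P Q 0) := by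
    simpa [fromBlocks_multiply, hPji, hQji] using fromBlocks_diagonal_mul_mem_oneForms
      ((Q j i)⁻¹ • B) (fromBlocks_smul_one_mem_oneForms P Q hij.symm)
  simpa [fromBlocks_add] using add_mem hA hB

/-- for the spectral triple (Mₙ(ℂ), ℂⁿ ⊗ ℂ², D_n), where Mₙ(ℂ) acts
diagonally as a ⊕ a, the module of 1-forms Ω¹_{D_n}(Mₙ(ℂ)) — the span of elements
(a⊕a)[D_n, b⊕b] — is exactly the set of block matrices [[0, A],[B, 0]], A,B ∈ Mₙ(ℂ). -/
theorem stmt_16 (n : ℕ) (hn : 2 ≤ n) (θ : ℝ) (hθ : 0 < θ) :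
    (Submodule.span ℂ
      {x : Matrix (Fin n ⊕ Fin n) (Fin n ⊕ Fin n) ℂ |
        ∃ a b : Matrix (Fin n) (Fin n) ℂ,
          x = Matrix.fromBlocks a 0 0 a *
            (diracN n θ * Matrix.fromBlocks b 0 0 b
              - Matrix.fromBlocks b 0 0 b * diracN n θ)} : Set _)
    = {m : Matrix (Fin n ⊕ Fin n) (Fin n ⊕ Fin n) ℂ |
        ∃ A B : Matrix (Fin n) (Fin n) ℂ, m = Matrix.fromBlocks 0 A B 0} := by
  have hc : ((√(2 / θ) : ℝ) : ℂ) ≠ 0 :=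
    Complex.ofReal_ne_zero.2 (Real.sqrt_pos.2 (by positivity)).ne'
  set c : ℂ := ((√(2 / θ) : ℝ) : ℂ)
  have hdirac : diracN n θ = fromBlocks 0 (c • (lowering n)ᴴ) (c • lowering n) 0 := by
    simp [diracN, fromBlocks_smul, c]
  have key := oneForms_fromBlocks_eq_offDiagonalBlocks (c • (lowering n)ᴴ) (c • lowering n)
    (i := ⟨0, by omega⟩) (j := ⟨1, by omega⟩) (by simp) (by simp [lowering, hc])
    (by simp [lowering]) (by simp [lowering]) (by simp [lowering, hc])
  rw [← hdirac] at key
  exact congrArg SetLike.coe key
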